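/- arXiv:2502.09817 — 2 statements merged into one kernel-verified Lean document; each statement's English description precedes it below -/
import Mathlib

section
/- For any secure aggregation scheme for (F, G) in which the matrix F has no zero columns, the entropy of the source key satisfies H[Z_Σ] ≥ (rank([F; G]) − rank(F)) · L · log q, where [F; G] denotes the row stack of F and G. -/
/-!
Shannon entropy machinery for finitely-supported random variables on a finite
probability space, and the definition of a vector-linear secure aggregation
scheme (Yuan–Sun, "Vector Linear Secure Aggregation").
-/

open scoped BigOperators Classical

namespace SecAgg

noncomputable section

variable {Ω : Type*} [Fintype Ω]

/-- Probability that the random variable `X` takes the value `a`, under the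
probability mass function `p` on the finite sample space `Ω`. -/
def pr {α : Type*} (p : Ω → ℝ) (X : Ω → α) (a : α) : ℝ :=
  ∑ ω, if X ω = a then p ω else 0

/-- Shannon entropy (natural-log units) of a random variable `X` on a finite
probability space with mass function `p`. -/
def H {α : Type*} (p : Ω → ℝ) (X : Ω → α) : ℝ :=
  ∑ a ∈ Finset.univ.image X, Real.negMulLog (pr p X a)

/-- Conditional Shannon entropy `H[X | Y] = H[(X,Y)] - H[Y]`. -/
def Hc {α β : Type*} (p : Ω → ℝ) (X : Ω → α) (Y : Ω → β) : ℝ :=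
  H p (fun ω => (X ω, Y ω)) - H p Y

/-- Mutual information `I[X : Y] = H[X] + H[Y] - H[(X,Y)]`. -/
def MI {α β : Type*} (p : Ω → ℝ) (X : Ω → α) (Y : Ω → β) : ℝ :=
  H p X + H p Y - H p (fun ω => (X ω, Y ω))

/-- Conditional mutual information
`I[X : Y | Z] = H[(X,Z)] + H[(Y,Z)] - H[(X,Y,Z)] - H[Z]`. -/
def CMI {α β γ : Type*} (p : Ω → ℝ) (X : Ω → α) (Y : Ω → β) (Z : Ω → γ) : ℝ :=
  H p (fun ω => (X ω, Z ω)) + H p (fun ω => (Y ω, Z ω))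
    - H p (fun ω => (X ω, Y ω, Z ω)) - H p Z

/-- A secure aggregation scheme for the pair of linear maps `(F, G)`:
`K` users, inputs of length `L` over the finite field `𝔽`; the server must
learn `F * W` and nothing more about `G * W`.  `κ k` is the alphabet of
user `k`'s key, `σ` the alphabet of the source key, `χ k` the alphabet of
user `k`'s message. -/
structure Scheme (𝔽 : Type) [Field 𝔽] [Fintype 𝔽] (L : ℕ) {K M N : ℕ}
    (F : Matrix (Fin M) (Fin K) 𝔽) (G : Matrix (Fin N) (Fin K) 𝔽)
    (Ω : Type) [Fintype Ω] (κ : Fin K → Type) (σ : Type) (χ : Fin K → Type) where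
  /-- probability mass function on the sample space -/
  p : Ω → ℝ
  p_nonneg : ∀ ω, 0 ≤ p ω
  p_sum_one : ∑ ω, p ω = 1
  /-- the input, a `K × L` matrix of field elements (row `k` is user `k`'s input) -/
  W : Ω → Matrix (Fin K) (Fin L) 𝔽
  /-- user `k`'s key -/
  Z : ∀ k : Fin K, Ω → κ k
  /-- the source key -/
  Zsrc : Ω → σ
  /-- user `k`'s message -/
  X : ∀ k : Fin K, Ω → χ k
  /-- the input is uniformly distributed -/
  W_unif : ∀ w : Matrix (Fin K) (Fin L) 𝔽,
    pr p W w = (Fintype.card (Matrix (Fin K) (Fin L) 𝔽) : ℝ)⁻¹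
  /-- the input is independent of all keys (including the source key) -/
  indep : ∀ (w : Matrix (Fin K) (Fin L) 𝔽) (z : (∀ k, κ k) × σ),
    pr p (fun ω => (W ω, ((fun k => Z k ω), Zsrc ω))) (w, z)
      = pr p W w * pr p (fun ω => ((fun k => Z k ω), Zsrc ω)) z
  /-- each key is a deterministic function of the source key -/
  Z_det : ∀ k : Fin K, ∃ f : σ → κ k, ∀ ω, Z k ω = f (Zsrc ω)
  /-- each message is a deterministic function of (own input row, own key) -/
  X_det : ∀ k : Fin K, ∃ f : (Fin L → 𝔽) → κ k → χ k, ∀ ω, X k ω = f (W ω k) (Z k ω)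
  /-- correctness: `F ⬝ W` is determined by the messages -/
  correct : Hc p (fun ω => F * W ω) (fun ω k => X k ω) = 0
  /-- security: the messages reveal nothing about `G ⬝ W` beyond `F ⬝ W` -/
  secure : CMI p (fun ω => G * W ω) (fun ω k => X k ω) (fun ω => F * W ω) = 0

end

end SecAgg

namespace SecAgg

namespace Aux
open Real Finset


/-! ### negMulLog lemmas -/

lemma negMulLog_add_le {x y : ℝ} (hx : 0 ≤ x) (hy : 0 ≤ y) :
    Real.negMulLog (x + y) ≤ Real.negMulLog x + Real.negMulLog y := by
  rcases hx.eq_or_lt with h | hx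
  · simp [← h]
  rcases hy.eq_or_lt with h | hy
  · simp [← h]
  have h1 : Real.negMulLog (x + y) = -x * Real.log (x+y) + -y * Real.log (x+y) := by
    simp [Real.negMulLog]; ring
  rw [h1]
  have hxle : Real.log x ≤ Real.log (x + y) := Real.log_le_log hx (by linarith)
  have hyle : Real.log y ≤ Real.log (x + y) := Real.log_le_log hy (by linarith)
  have := mul_le_mul_of_nonneg_left hxle hx.le
  have := mul_le_mul_of_nonneg_left hyle hy.le
  simp only [Real.negMulLog]
  nlinarith

lemma negMulLog_add_lt {x y : ℝ} (hx : 0 < x) (hy : 0 < y) :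
    Real.negMulLog (x + y) < Real.negMulLog x + Real.negMulLog y := by
  have h1 : Real.negMulLog (x + y) = -x * Real.log (x+y) + -y * Real.log (x+y) := by
    simp [Real.negMulLog]; ring
  rw [h1]
  have hxlt : Real.log x < Real.log (x + y) := Real.log_lt_log hx (by linarith)
  have hylt : Real.log y < Real.log (x + y) := Real.log_lt_log hy (by linarith)
  have h2 := mul_lt_mul_of_pos_left hxlt hx
  have h3 := mul_lt_mul_of_pos_left hylt hy
  simp only [Real.negMulLog]
  nlinarith

lemma negMulLog_sum_le {α : Type*} {s : Finset α} {x : α → ℝ} (hx : ∀ a ∈ s, 0 ≤ x a) :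
    Real.negMulLog (∑ a ∈ s, x a) ≤ ∑ a ∈ s, Real.negMulLog (x a) := by
  classical
  induction s using Finset.cons_induction with
  | empty => simp
  | cons a s ha ih =>
    rw [Finset.sum_cons, Finset.sum_cons]
    refine (negMulLog_add_le (hx a (Finset.mem_cons_self a s)) ?_).trans ?_
    · exact Finset.sum_nonneg fun b hb => hx b (Finset.mem_cons_of_mem hb)
    · have := ih (fun b hb => hx b (Finset.mem_cons_of_mem hb))
      linarith

lemma negMulLog_sum_lt {α : Type*} {s : Finset α} {x : α → ℝ} (hx : ∀ a ∈ s, 0 ≤ x a)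
    {a₁ a₂ : α} (h1 : a₁ ∈ s) (h2 : a₂ ∈ s) (hne : a₁ ≠ a₂)
    (hp1 : 0 < x a₁) (hp2 : 0 < x a₂) :
    Real.negMulLog (∑ a ∈ s, x a) < ∑ a ∈ s, Real.negMulLog (x a) := by
  classical
  have hsplit : ∑ a ∈ s, x a = x a₁ + ∑ a ∈ s.erase a₁, x a := by
    rw [Finset.add_sum_erase _ _ h1]
  have h2' : a₂ ∈ s.erase a₁ := Finset.mem_erase.2 ⟨hne.symm, h2⟩
  have hpos : 0 < ∑ a ∈ s.erase a₁, x a :=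
    lt_of_lt_of_le hp2 (Finset.single_le_sum (fun b hb => hx b (Finset.mem_of_mem_erase hb)) h2')
  calc Real.negMulLog (∑ a ∈ s, x a)
      < Real.negMulLog (x a₁) + Real.negMulLog (∑ a ∈ s.erase a₁, x a) := by
        rw [hsplit]; exact negMulLog_add_lt hp1 hpos
    _ ≤ Real.negMulLog (x a₁) + ∑ a ∈ s.erase a₁, Real.negMulLog (x a) := by
        have := negMulLog_sum_le (s := s.erase a₁) (x := x)
          (fun b hb => hx b (Finset.mem_of_mem_erase hb))
        linarith
    _ = ∑ a ∈ s, Real.negMulLog (x a) :=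
        Finset.add_sum_erase _ (fun a => Real.negMulLog (x a)) h1

lemma negMulLog_sum_eq {α : Type*} {s : Finset α} {x : α → ℝ}
    (huniq : ∀ a ∈ s, ∀ a' ∈ s, x a ≠ 0 → x a' ≠ 0 → a = a') :
    Real.negMulLog (∑ a ∈ s, x a) = ∑ a ∈ s, Real.negMulLog (x a) := by
  classical
  by_cases hz : ∀ a ∈ s, x a = 0
  · rw [Finset.sum_eq_zero hz, Finset.sum_eq_zero (fun a ha => by rw [hz a ha]; simp)]
    simp
  push_neg at hz
  obtain ⟨a₀, ha₀, hx₀⟩ := hz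
  have hs : ∑ a ∈ s, x a = x a₀ :=
    Finset.sum_eq_single_of_mem a₀ ha₀ (fun b hb hbne => by
      by_contra hxb; exact hbne (huniq b hb a₀ ha₀ hxb hx₀))
  have hs2 : ∑ a ∈ s, Real.negMulLog (x a) = Real.negMulLog (x a₀) :=
    Finset.sum_eq_single_of_mem a₀ ha₀ (fun b hb hbne => by
      by_contra hxb
      have : x b ≠ 0 := by
        intro h; exact hxb (by rw [h]; simp)
      exact hbne (huniq b hb a₀ ha₀ this hx₀))
  rw [hs, hs2]

/-! ### pr lemmas -/

variable {Ω : Type*} [Fintype Ω] {α β : Type*} {p : Ω → ℝ} {X : Ω → α} {Y : Ω → β}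

lemma pr_nonneg (hp : ∀ ω, 0 ≤ p ω) (X : Ω → α) (a : α) : 0 ≤ pr p X a :=
  Finset.sum_nonneg fun ω _ => by by_cases h : X ω = a <;> simp [h, hp ω]

lemma pr_eq_zero_of_ne {a : α} (ha : ∀ ω, X ω ≠ a) : pr p X a = 0 :=
  Finset.sum_eq_zero fun ω _ => by simp [ha ω]

lemma exists_of_pr_pos (hp : ∀ ω, 0 ≤ p ω) {a : α} (h : 0 < pr p X a) :
    ∃ ω, 0 < p ω ∧ X ω = a := by
  by_contra hc
  push_neg at hc
  have : pr p X a = 0 := Finset.sum_eq_zero fun ω _ => by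
    by_cases hx : X ω = a
    · have h1 : ¬ 0 < p ω := fun hpos => hc ω hpos hx
      have : p ω = 0 := le_antisymm (not_lt.1 h1) (hp ω)
      simp [hx, this]
    · simp [hx]
  linarith

lemma pr_pos_self (hp : ∀ ω, 0 ≤ p ω) {ω : Ω} (hω : 0 < p ω) (X : Ω → α) :
    0 < pr p X (X ω) := by
  have hle : p ω ≤ pr p X (X ω) := by
    have := Finset.single_le_sum (f := fun ω' => if X ω' = X ω then p ω' else 0)
      (fun ω' _ => by by_cases h : X ω' = X ω <;> simp [h, hp ω']) (Finset.mem_univ ω)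
    simpa [pr] using this
  linarith

lemma sum_pr {s : Finset α} (hs : ∀ ω, X ω ∈ s) :
    ∑ a ∈ s, pr p X a = ∑ ω, p ω := by
  unfold pr
  rw [Finset.sum_comm]
  refine Finset.sum_congr rfl fun ω _ => ?_
  rw [Finset.sum_eq_single_of_mem (X ω) (hs ω)]
  · simp
  · intro a _ hne
    simp [Ne.symm hne]

lemma pr_comp_filter {s : Finset α} (hs : ∀ ω, X ω ∈ s) (f : α → β) (b : β)
    {t : Finset α} (ht : ∀ a, a ∈ t ↔ a ∈ s ∧ f a = b) :
    pr p (fun ω => f (X ω)) b = ∑ a ∈ t, pr p X a := by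
  unfold pr
  rw [Finset.sum_comm]
  refine Finset.sum_congr rfl fun ω _ => ?_
  by_cases h : f (X ω) = b
  · rw [if_pos h, Finset.sum_eq_single_of_mem (X ω) ((ht (X ω)).2 ⟨hs ω, h⟩)]
    · simp
    · intro a _ hne
      simp [Ne.symm hne]
  · rw [if_neg h, Finset.sum_eq_zero]
    intro a ha
    have := ((ht a).1 ha).2
    have hne : X ω ≠ a := fun he => h (he ▸ this)
    simp [hne]

lemma pr_marginal_right {s : Finset α} (hs : ∀ ω, X ω ∈ s) (b : β) :
    pr p Y b = ∑ a ∈ s, pr p (fun ω => (X ω, Y ω)) (a, b) := by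
  unfold pr
  rw [Finset.sum_comm]
  refine Finset.sum_congr rfl fun ω _ => ?_
  by_cases h : Y ω = b
  · rw [if_pos h, Finset.sum_eq_single_of_mem (X ω) (hs ω)]
    · simp [h]
    · intro a _ hne
      have : ¬ ((X ω, Y ω) = (a, b)) := fun he => hne (by cases he; rfl)
      simp [this]
  · rw [if_neg h, Finset.sum_eq_zero]
    intro a _
    have : ¬ ((X ω, Y ω) = (a, b)) := fun he => h (by cases he; rfl)
    simp [this]

lemma pr_marginal_left {t : Finset β} (ht : ∀ ω, Y ω ∈ t) (a : α) :
    pr p X a = ∑ b ∈ t, pr p (fun ω => (X ω, Y ω)) (a, b) := by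
  unfold pr
  rw [Finset.sum_comm]
  refine Finset.sum_congr rfl fun ω _ => ?_
  by_cases h : X ω = a
  · rw [if_pos h, Finset.sum_eq_single_of_mem (Y ω) (ht ω)]
    · simp [h]
    · intro b _ hne
      have : ¬ ((X ω, Y ω) = (a, b)) := fun he => hne (by cases he; rfl)
      simp [this]
  · rw [if_neg h, Finset.sum_eq_zero]
    intro b _
    have : ¬ ((X ω, Y ω) = (a, b)) := fun he => h (by cases he; rfl)
    simp [this]

lemma H_eq_sum {s : Finset α} (hs : ∀ ω, X ω ∈ s) :
    H p X = ∑ a ∈ s, Real.negMulLog (pr p X a) := by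
  unfold H
  refine Finset.sum_subset ?_ fun a _ ha => ?_
  · intro a ha
    obtain ⟨ω, _, rfl⟩ := Finset.mem_image.1 ha
    exact hs ω
  · have : ∀ ω, X ω ≠ a := fun ω he =>
      ha (Finset.mem_image.2 ⟨ω, Finset.mem_univ ω, he⟩)
    rw [pr_eq_zero_of_ne this]
    simp

/-! ### entropy comparison lemmas -/

lemma H_comp_le (hp : ∀ ω, 0 ≤ p ω) (f : α → β) :
    H p (fun ω => f (X ω)) ≤ H p X := by
  set s := Finset.univ.image X with hsdef
  have hs : ∀ ω, X ω ∈ s := fun ω => Finset.mem_image_of_mem X (Finset.mem_univ ω)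
  set t := Finset.univ.image (fun ω => f (X ω)) with htdef
  have ht : ∀ ω, f (X ω) ∈ t := fun ω => Finset.mem_image_of_mem _ (Finset.mem_univ ω)
  calc H p (fun ω => f (X ω))
      = ∑ b ∈ t, Real.negMulLog (pr p (fun ω => f (X ω)) b) := H_eq_sum ht
    _ ≤ ∑ b ∈ t, ∑ a ∈ s.filter (fun a => f a = b), Real.negMulLog (pr p X a) := by
        refine Finset.sum_le_sum fun b _ => ?_
        rw [pr_comp_filter hs f b (fun a => Finset.mem_filter)]
        exact negMulLog_sum_le fun a _ => pr_nonneg hp X a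
    _ = ∑ a ∈ s, Real.negMulLog (pr p X a) := by
        refine Finset.sum_fiberwise_of_maps_to (fun a ha => ?_) _
        obtain ⟨ω, _, rfl⟩ := Finset.mem_image.1 ha
        exact ht ω
    _ = H p X := (H_eq_sum hs).symm

lemma H_comp_inj (f : α → β) (hf : Function.Injective f) :
    H p (fun ω => f (X ω)) = H p X := by
  set s := Finset.univ.image X with hsdef
  have hs : ∀ ω, X ω ∈ s := fun ω => Finset.mem_image_of_mem X (Finset.mem_univ ω)
  have hs' : ∀ ω, f (X ω) ∈ s.image f := fun ω => Finset.mem_image_of_mem f (hs ω)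
  have hpr : ∀ a, pr p (fun ω => f (X ω)) (f a) = pr p X a := fun a => by
    unfold pr
    exact Finset.sum_congr rfl fun ω _ => by simp [hf.eq_iff]
  calc H p (fun ω => f (X ω))
      = ∑ b ∈ s.image f, Real.negMulLog (pr p (fun ω => f (X ω)) b) := H_eq_sum hs'
    _ = ∑ a ∈ s, Real.negMulLog (pr p (fun ω => f (X ω)) (f a)) :=
        Finset.sum_image (fun a _ a' _ h => hf h)
    _ = ∑ a ∈ s, Real.negMulLog (pr p X a) := Finset.sum_congr rfl fun a _ => by rw [hpr a]
    _ = H p X := (H_eq_sum hs).symm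

/-- subadditivity: `H (X, Y) ≤ H X + H Y`. -/
lemma H_pair_le (hp : ∀ ω, 0 ≤ p ω) (h1 : ∑ ω, p ω = 1) :
    H p (fun ω => (X ω, Y ω)) ≤ H p X + H p Y := by
  set sA := Finset.univ.image X with hsA
  set sB := Finset.univ.image Y with hsB
  have hsa : ∀ ω, X ω ∈ sA := fun ω => Finset.mem_image_of_mem X (Finset.mem_univ ω)
  have hsb : ∀ ω, Y ω ∈ sB := fun ω => Finset.mem_image_of_mem Y (Finset.mem_univ ω)
  set P : α × β → ℝ := pr p (fun ω => (X ω, Y ω)) with hP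
  have hPn : ∀ c, 0 ≤ P c := fun c => pr_nonneg hp _ c
  have hXa : ∀ a, pr p X a = ∑ b ∈ sB, P (a, b) := fun a => pr_marginal_left hsb a
  have hYb : ∀ b, pr p Y b = ∑ a ∈ sA, P (a, b) := fun b => pr_marginal_right hsa b
  have hXn : ∀ a, 0 ≤ pr p X a := pr_nonneg hp X
  have hYn : ∀ b, 0 ≤ pr p Y b := pr_nonneg hp Y
  have hHp : H p (fun ω => (X ω, Y ω)) = ∑ c ∈ sA ×ˢ sB, Real.negMulLog (P c) :=
    H_eq_sum fun ω => Finset.mem_product.2 ⟨hsa ω, hsb ω⟩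
  have hsumX : ∑ a ∈ sA, pr p X a = 1 := by rw [sum_pr hsa, h1]
  have hsumY : ∑ b ∈ sB, pr p Y b = 1 := by rw [sum_pr hsb, h1]
  have hsum1 : ∑ c ∈ sA ×ˢ sB, P c = 1 := by
    rw [Finset.sum_product]
    calc ∑ a ∈ sA, ∑ b ∈ sB, P (a, b) = ∑ a ∈ sA, pr p X a :=
          Finset.sum_congr rfl fun a _ => (hXa a).symm
      _ = 1 := hsumX
  have key : ∀ c ∈ sA ×ˢ sB,
      Real.negMulLog (P c) + P c * Real.log (pr p X c.1) + P c * Real.log (pr p Y c.2)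
        ≤ pr p X c.1 * pr p Y c.2 - P c := by
    rintro ⟨a, b⟩ hc
    obtain ⟨ha, hb⟩ := Finset.mem_product.1 hc
    rcases (hPn (a, b)).eq_or_lt with hz | hpos
    · simp only [← hz, Real.negMulLog_zero, zero_mul, add_zero]
      simpa using mul_nonneg (hXn a) (hYn b)
    · have hpa : P (a, b) ≤ pr p X a := by
        rw [hXa a]
        exact Finset.single_le_sum (fun b' _ => hPn (a, b')) hb
      have hpb : P (a, b) ≤ pr p Y b := by
        rw [hYb b]
        exact Finset.single_le_sum (fun a' _ => hPn (a', b)) ha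
      have hpa0 : 0 < pr p X a := lt_of_lt_of_le hpos hpa
      have hpb0 : 0 < pr p Y b := lt_of_lt_of_le hpos hpb
      have hquot : 0 < pr p X a * pr p Y b / P (a, b) :=
        div_pos (mul_pos hpa0 hpb0) hpos
      have hlog := Real.log_le_sub_one_of_pos hquot
      have hexp : Real.log (pr p X a * pr p Y b / P (a, b))
          = Real.log (pr p X a) + Real.log (pr p Y b) - Real.log (P (a, b)) := by
        rw [Real.log_div (by positivity) (ne_of_gt hpos),
          Real.log_mul (ne_of_gt hpa0) (ne_of_gt hpb0)]
      have hmul := mul_le_mul_of_nonneg_left hlog (le_of_lt hpos)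
      rw [hexp] at hmul
      have hdiv : P (a, b) * (pr p X a * pr p Y b / P (a, b) - 1)
          = pr p X a * pr p Y b - P (a, b) := by
        field_simp
      rw [hdiv] at hmul
      simp only [Real.negMulLog]
      nlinarith [hmul]
  have hsumkey := Finset.sum_le_sum key
  rw [Finset.sum_add_distrib, Finset.sum_add_distrib, Finset.sum_sub_distrib, hsum1] at hsumkey
  have e1 : ∑ c ∈ sA ×ˢ sB, P c * Real.log (pr p X c.1) = - H p X := by
    rw [Finset.sum_product]
    have : ∀ a ∈ sA, ∑ b ∈ sB, P (a, b) * Real.log (pr p X a)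
        = pr p X a * Real.log (pr p X a) := fun a _ => by
      rw [← Finset.sum_mul, ← hXa a]
    rw [Finset.sum_congr rfl this, H_eq_sum hsa, ← Finset.sum_neg_distrib]
    exact Finset.sum_congr rfl fun a _ => by simp [Real.negMulLog]
  have e2 : ∑ c ∈ sA ×ˢ sB, P c * Real.log (pr p Y c.2) = - H p Y := by
    rw [Finset.sum_product_right]
    have : ∀ b ∈ sB, ∑ a ∈ sA, P (a, b) * Real.log (pr p Y b)
        = pr p Y b * Real.log (pr p Y b) := fun b _ => by
      rw [← Finset.sum_mul, ← hYb b]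
    rw [Finset.sum_congr rfl this, H_eq_sum hsb, ← Finset.sum_neg_distrib]
    exact Finset.sum_congr rfl fun b _ => by simp [Real.negMulLog]
  have e3 : ∑ c ∈ sA ×ˢ sB, pr p X c.1 * pr p Y c.2 = 1 := by
    rw [Finset.sum_product]
    calc ∑ a ∈ sA, ∑ b ∈ sB, pr p X a * pr p Y b
        = ∑ a ∈ sA, pr p X a * ∑ b ∈ sB, pr p Y b :=
          Finset.sum_congr rfl fun a _ => (Finset.mul_sum _ _ _).symm
      _ = 1 := by rw [hsumY]; simp [hsumX]
  rw [e1, e2, e3, ← hHp] at hsumkey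
  linarith

/-! ### determinism on the support -/

/-- `X` is determined by `Y` on the support of `p`. -/
def DetOn (p : Ω → ℝ) (Y : Ω → β) (X : Ω → α) : Prop :=
  ∀ ω ω', 0 < p ω → 0 < p ω' → Y ω = Y ω' → X ω = X ω'

lemma H_pair_eq_of_detOn (hp : ∀ ω, 0 ≤ p ω) (hdet : DetOn p Y X) :
    H p (fun ω => (X ω, Y ω)) = H p Y := by
  set sA := Finset.univ.image X with hsA
  set sB := Finset.univ.image Y with hsB
  have hsa : ∀ ω, X ω ∈ sA := fun ω => Finset.mem_image_of_mem X (Finset.mem_univ ω)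
  have hsb : ∀ ω, Y ω ∈ sB := fun ω => Finset.mem_image_of_mem Y (Finset.mem_univ ω)
  set P : α × β → ℝ := pr p (fun ω => (X ω, Y ω)) with hP
  have hPn : ∀ c, 0 ≤ P c := fun c => pr_nonneg hp _ c
  have huniq : ∀ b, ∀ a ∈ sA, ∀ a' ∈ sA, P (a, b) ≠ 0 → P (a', b) ≠ 0 → a = a' := by
    intro b a _ a' _ h h'
    obtain ⟨ω, hω, hXY⟩ := exists_of_pr_pos hp (lt_of_le_of_ne (hPn (a, b)) (Ne.symm h))
    obtain ⟨ω', hω', hXY'⟩ := exists_of_pr_pos hp (lt_of_le_of_ne (hPn (a', b)) (Ne.symm h'))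
    have h1 : X ω = a ∧ Y ω = b := Prod.mk_inj.1 hXY
    have h2 : X ω' = a' ∧ Y ω' = b := Prod.mk_inj.1 hXY'
    rw [← h1.1, ← h2.1]
    exact hdet ω ω' hω hω' (h1.2.trans h2.2.symm)
  calc H p (fun ω => (X ω, Y ω))
      = ∑ c ∈ sA ×ˢ sB, Real.negMulLog (P c) :=
        H_eq_sum fun ω => Finset.mem_product.2 ⟨hsa ω, hsb ω⟩
    _ = ∑ b ∈ sB, ∑ a ∈ sA, Real.negMulLog (P (a, b)) := by rw [Finset.sum_product_right]
    _ = ∑ b ∈ sB, Real.negMulLog (pr p Y b) := by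
        refine Finset.sum_congr rfl fun b _ => ?_
        rw [pr_marginal_right hsa b]
        exact (negMulLog_sum_eq fun a ha a' ha' => huniq b a ha a' ha').symm
    _ = H p Y := (H_eq_sum hsb).symm

lemma detOn_of_H_pair_eq (hp : ∀ ω, 0 ≤ p ω)
    (heq : H p (fun ω => (X ω, Y ω)) = H p Y) : DetOn p Y X := by
  intro ω₁ ω₂ hω₁ hω₂ hY
  by_contra hne
  set sA := Finset.univ.image X with hsA
  set sB := Finset.univ.image Y with hsB
  have hsa : ∀ ω, X ω ∈ sA := fun ω => Finset.mem_image_of_mem X (Finset.mem_univ ω)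
  have hsb : ∀ ω, Y ω ∈ sB := fun ω => Finset.mem_image_of_mem Y (Finset.mem_univ ω)
  set P : α × β → ℝ := pr p (fun ω => (X ω, Y ω)) with hP
  have hPn : ∀ c, 0 ≤ P c := fun c => pr_nonneg hp _ c
  have hlt : H p Y < H p (fun ω => (X ω, Y ω)) := by
    have hHp : H p (fun ω => (X ω, Y ω)) = ∑ b ∈ sB, ∑ a ∈ sA, Real.negMulLog (P (a, b)) := by
      rw [H_eq_sum (X := fun ω => (X ω, Y ω))
        (fun ω => Finset.mem_product.2 ⟨hsa ω, hsb ω⟩)]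
      rw [Finset.sum_product_right]
    rw [hHp, H_eq_sum hsb]
    refine Finset.sum_lt_sum (fun b _ => ?_) ⟨Y ω₁, hsb ω₁, ?_⟩
    · rw [pr_marginal_right hsa b]
      exact negMulLog_sum_le fun a _ => hPn (a, b)
    · rw [pr_marginal_right hsa (Y ω₁)]
      refine negMulLog_sum_lt (fun a _ => hPn (a, Y ω₁)) (hsa ω₁) (hsa ω₂) hne ?_ ?_
      · have := pr_pos_self hp hω₁ (fun ω => (X ω, Y ω))
        exact this
      · have := pr_pos_self hp hω₂ (fun ω => (X ω, Y ω))
        rw [hY]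
        exact this
  linarith

/-- independence implies additivity of entropy -/
lemma H_pair_of_indep (hp : ∀ ω, 0 ≤ p ω) (h1 : ∑ ω, p ω = 1)
    (hind : ∀ a b, pr p (fun ω => (X ω, Y ω)) (a, b) = pr p X a * pr p Y b) :
    H p (fun ω => (X ω, Y ω)) = H p X + H p Y := by
  set sA := Finset.univ.image X with hsA
  set sB := Finset.univ.image Y with hsB
  have hsa : ∀ ω, X ω ∈ sA := fun ω => Finset.mem_image_of_mem X (Finset.mem_univ ω)
  have hsb : ∀ ω, Y ω ∈ sB := fun ω => Finset.mem_image_of_mem Y (Finset.mem_univ ω)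
  have hsumX : ∑ a ∈ sA, pr p X a = 1 := by rw [sum_pr hsa, h1]
  have hsumY : ∑ b ∈ sB, pr p Y b = 1 := by rw [sum_pr hsb, h1]
  calc H p (fun ω => (X ω, Y ω))
      = ∑ c ∈ sA ×ˢ sB, Real.negMulLog (pr p (fun ω => (X ω, Y ω)) c) :=
        H_eq_sum fun ω => Finset.mem_product.2 ⟨hsa ω, hsb ω⟩
    _ = ∑ a ∈ sA, ∑ b ∈ sB, Real.negMulLog (pr p X a * pr p Y b) := by
        rw [Finset.sum_product]
        exact Finset.sum_congr rfl fun a _ => Finset.sum_congr rfl fun b _ => by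
          rw [hind a b]
    _ = ∑ a ∈ sA, ∑ b ∈ sB,
          (pr p Y b * Real.negMulLog (pr p X a) + pr p X a * Real.negMulLog (pr p Y b)) := by
        exact Finset.sum_congr rfl fun a _ => Finset.sum_congr rfl fun b _ =>
          Real.negMulLog_mul _ _
    _ = H p X + H p Y := by
        rw [H_eq_sum hsa, H_eq_sum hsb]
        rw [Finset.sum_congr rfl (fun a (_ : a ∈ sA) => Finset.sum_add_distrib)]
        rw [Finset.sum_add_distrib]
        congr 1
        · calc ∑ a ∈ sA, ∑ b ∈ sB, pr p Y b * Real.negMulLog (pr p X a)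
              = ∑ a ∈ sA, (∑ b ∈ sB, pr p Y b) * Real.negMulLog (pr p X a) :=
                Finset.sum_congr rfl fun a _ => (Finset.sum_mul _ _ _).symm
            _ = ∑ a ∈ sA, Real.negMulLog (pr p X a) := by
                rw [hsumY]; simp
        · calc ∑ a ∈ sA, ∑ b ∈ sB, pr p X a * Real.negMulLog (pr p Y b)
              = ∑ a ∈ sA, pr p X a * ∑ b ∈ sB, Real.negMulLog (pr p Y b) :=
                Finset.sum_congr rfl fun a _ => (Finset.mul_sum _ _ _).symm
            _ = ∑ b ∈ sB, Real.negMulLog (pr p Y b) := by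
                rw [← Finset.sum_mul, hsumX, one_mul]

/-! ### entropy of a linear image of a uniform matrix -/

lemma H_matmul_uniform {𝔽 : Type} [Field 𝔽] [Fintype 𝔽] {K L : ℕ} {m : Type*} [Fintype m]
    (p : Ω → ℝ) (W : Ω → Matrix (Fin K) (Fin L) 𝔽)
    (hW : ∀ w, pr p W w = (Fintype.card (Matrix (Fin K) (Fin L) 𝔽) : ℝ)⁻¹)
    (A : Matrix m (Fin K) 𝔽) :
    H p (fun ω => A * W ω) = (A.rank * L : ℕ) * Real.log (Fintype.card 𝔽) := by
  set Φ : Matrix (Fin K) (Fin L) 𝔽 → Matrix m (Fin L) 𝔽 := fun w => A * w with hΦ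
  set fib : Matrix m (Fin L) 𝔽 → Finset (Matrix (Fin K) (Fin L) 𝔽) :=
    fun y => Finset.univ.filter (fun w => Φ w = y) with hfib
  have hpr : ∀ y, pr p (fun ω => Φ (W ω)) y
      = (fib y).card * ((Fintype.card (Matrix (Fin K) (Fin L) 𝔽) : ℝ))⁻¹ := by
    intro y
    rw [pr_comp_filter (s := Finset.univ) (fun ω => Finset.mem_univ _) Φ y
      (t := fib y) (fun a => by simp [hfib])]
    rw [Finset.sum_congr rfl (fun w _ => hW w), Finset.sum_const, nsmul_eq_mul]
  have hequi : ∀ w₀ w₁ : Matrix (Fin K) (Fin L) 𝔽, (fib (Φ w₀)).card = (fib (Φ w₁)).card := by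
    intro w₀ w₁
    refine Finset.card_bij' (fun w _ => w - w₀ + w₁) (fun w _ => w - w₁ + w₀) ?_ ?_ ?_ ?_
    · intro w hw
      have hw' : A * w = A * w₀ := (Finset.mem_filter.1 hw).2
      refine Finset.mem_filter.2 ⟨Finset.mem_univ _, ?_⟩
      show A * (w - w₀ + w₁) = A * w₁
      rw [Matrix.mul_add, Matrix.mul_sub, hw']
      abel
    · intro w hw
      have hw' : A * w = A * w₁ := (Finset.mem_filter.1 hw).2
      refine Finset.mem_filter.2 ⟨Finset.mem_univ _, ?_⟩
      show A * (w - w₁ + w₀) = A * w₀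
      rw [Matrix.mul_add, Matrix.mul_sub, hw']
      abel
    · intro w _
      show w - w₀ + w₁ - w₁ + w₀ = w
      rw [add_sub_cancel_right, sub_add_cancel]
    · intro w _
      show w - w₁ + w₀ - w₀ + w₁ = w
      rw [add_sub_cancel_right, sub_add_cancel]
  set SF : Finset (Matrix m (Fin L) 𝔽) := Finset.univ.image Φ with hSF
  set c : ℕ := (fib (Φ 0)).card with hc
  have hcard : ∀ y ∈ SF, (fib y).card = c := by
    intro y hy
    obtain ⟨w₀, _, rfl⟩ := Finset.mem_image.1 hy
    exact hequi w₀ 0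
  have hc0 : 0 < c := by
    rw [hc]
    exact Finset.card_pos.2 ⟨0, Finset.mem_filter.2 ⟨Finset.mem_univ _, rfl⟩⟩
  have hSF0 : 0 < SF.card :=
    Finset.card_pos.2 ⟨Φ 0, Finset.mem_image_of_mem Φ (Finset.mem_univ 0)⟩
  have htot : Fintype.card (Matrix (Fin K) (Fin L) 𝔽) = SF.card * c := by
    have h1 : Fintype.card (Matrix (Fin K) (Fin L) 𝔽)
        = ∑ y ∈ SF, (Finset.univ.filter (fun w => Φ w = y)).card := by
      rw [← Finset.card_univ]
      exact Finset.card_eq_sum_card_fiberwise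
        (fun w _ => Finset.mem_image_of_mem Φ (Finset.mem_univ w))
    rw [h1, Finset.sum_congr rfl hcard, Finset.sum_const, smul_eq_mul]
  have hprc : ∀ y ∈ SF, pr p (fun ω => Φ (W ω)) y = ((SF.card : ℝ))⁻¹ := by
    intro y hy
    rw [hpr y, hcard y hy]
    have h2 : ((Fintype.card (Matrix (Fin K) (Fin L) 𝔽)) : ℝ) = (SF.card : ℝ) * (c : ℝ) := by
      exact_mod_cast htot
    rw [h2, mul_inv, mul_comm ((SF.card : ℝ))⁻¹ _, ← mul_assoc,
      mul_inv_cancel₀ (by positivity), one_mul]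
  have hH : H p (fun ω => Φ (W ω)) = Real.log (SF.card) := by
    rw [H_eq_sum (s := SF) (fun ω => Finset.mem_image_of_mem Φ (Finset.mem_univ (W ω)))]
    rw [Finset.sum_congr rfl (fun y hy => by rw [hprc y hy])]
    rw [Finset.sum_const, nsmul_eq_mul, Real.negMulLog, Real.log_inv]
    field_simp
  have hcardSF : SF.card = Fintype.card 𝔽 ^ (A.rank * L) := by
    have h1 : SF = (Set.range Φ).toFinset := by rw [Set.toFinset_range]
    rw [h1, Set.toFinset_card]
    have e : Set.range Φ ≃ (Fin L → LinearMap.range A.mulVecLin) :=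
      { toFun := fun y l => ⟨fun i => y.1 i l, by
          obtain ⟨w, hw⟩ := y.2
          exact ⟨fun k => w k l, by
            funext i
            rw [← hw]
            simp [Matrix.mulVecLin_apply, Matrix.mulVec, dotProduct,
              Matrix.mul_apply, hΦ]⟩⟩
        invFun := fun g => ⟨fun i l => (g l).1 i, by
          have hex := fun l => (g l).2
          choose v hv using hex
          refine ⟨fun k l => v l k, ?_⟩
          funext i l
          have h3 := congrFun (hv l) i
          simp [Matrix.mulVecLin_apply, Matrix.mulVec, dotProduct,
            Matrix.mul_apply, hΦ] at h3
          exact h3⟩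
        left_inv := fun y => Subtype.ext rfl
        right_inv := fun g => funext fun l => Subtype.ext rfl }
    rw [Fintype.card_congr e, Fintype.card_fun, Fintype.card_fin,
      Module.card_eq_pow_finrank (K := 𝔽), ← pow_mul]
    rfl
  have : H p (fun ω => A * W ω) = H p (fun ω => Φ (W ω)) := rfl
  rw [this, hH, hcardSF, Nat.cast_pow, Real.log_pow]

end Aux

end SecAgg

namespace SecAgg

/-- **Converse (Theorem 1, lower bound).** For any secure aggregation scheme for
`(F, G)` with `F` having no zero columns, the source-key entropy satisfies
`H[Z_Σ] ≥ (rank [F; G] − rank F) · L · log q`. -/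
theorem source_key_entropy_lower_bound
    {𝔽 : Type} [Field 𝔽] [Fintype 𝔽] {K M N : ℕ} {L : ℕ}
    (hK : 1 ≤ K) (hL : 1 ≤ L)
    (F : Matrix (Fin M) (Fin K) 𝔽) (G : Matrix (Fin N) (Fin K) 𝔽)
    (hF : F.rank = M) (hG : G.rank = N)
    (hFcol : ∀ k : Fin K, ∃ i : Fin M, F i k ≠ 0)
    (Ω : Type) [Fintype Ω] (κ : Fin K → Type) (σ : Type) (χ : Fin K → Type)
    (S : Scheme 𝔽 L F G Ω κ σ χ) :
    (((Matrix.fromRows F G).rank : ℝ) - (F.rank : ℝ)) * L * Real.log (Fintype.card 𝔽)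
      ≤ H S.p S.Zsrc := by
  classical
  obtain ⟨p, hp, h1, W, Z, Zs, X, W_unif, indep, Z_det, X_det, correct, secure⟩ := S
  show (((Matrix.fromRows F G).rank : ℝ) - (F.rank : ℝ)) * L * Real.log (Fintype.card 𝔽)
      ≤ H p Zs
  choose fz hz using Z_det
  choose fx hx using X_det
  -- entropies of linear images of the uniform input
  have hHA : H p (fun ω => F * W ω) = ((F.rank * L : ℕ) : ℝ) * Real.log (Fintype.card 𝔽) :=
    Aux.H_matmul_uniform p W W_unif F
  have hHBA : H p (fun ω => (G * W ω, F * W ω))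
      = (((Matrix.fromRows F G).rank * L : ℕ) : ℝ) * Real.log (Fintype.card 𝔽) := by
    have hinj : Function.Injective
        (fun c : Matrix (Fin N) (Fin L) 𝔽 × Matrix (Fin M) (Fin L) 𝔽 =>
          Matrix.fromRows c.2 c.1) := by
      intro c c' hcc
      have h2 : c.2 = c'.2 := by
        ext i l
        exact congrFun (congrFun hcc (Sum.inl i)) l
      have h3 : c.1 = c'.1 := by
        ext i l
        exact congrFun (congrFun hcc (Sum.inr i)) l
      exact Prod.ext h3 h2
    have hrel : H p (fun ω =>
          (fun c : Matrix (Fin N) (Fin L) 𝔽 × Matrix (Fin M) (Fin L) 𝔽 =>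
            Matrix.fromRows c.2 c.1) ((fun ω' => (G * W ω', F * W ω')) ω))
        = H p (fun ω => (G * W ω, F * W ω)) :=
      Aux.H_comp_inj (X := fun ω' => (G * W ω', F * W ω'))
        (fun c : Matrix (Fin N) (Fin L) 𝔽 × Matrix (Fin M) (Fin L) 𝔽 =>
          Matrix.fromRows c.2 c.1) hinj
    have hfun : (fun ω =>
          (fun c : Matrix (Fin N) (Fin L) 𝔽 × Matrix (Fin M) (Fin L) 𝔽 =>
            Matrix.fromRows c.2 c.1) ((fun ω' => (G * W ω', F * W ω')) ω))
        = (fun ω => Matrix.fromRows F G * W ω) := by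
      funext ω
      exact (Matrix.fromRows_mul F G (W ω)).symm
    rw [hfun] at hrel
    rw [← hrel]
    exact Aux.H_matmul_uniform p W W_unif (Matrix.fromRows F G)
  -- correctness: F * W is determined by the messages, on the support
  have hcor : H p (fun ω => (F * W ω, fun k => X k ω)) = H p (fun ω (k : Fin K) => X k ω) := by
    have hc := correct
    unfold Hc at hc
    linarith
  have hdetA : Aux.DetOn p (fun ω (k : Fin K) => X k ω) (fun ω => F * W ω) :=
    Aux.detOn_of_H_pair_eq hp hcor
  -- H (Xv, A) = H Xv
  have hXA : H p (fun ω => ((fun k => X k ω), F * W ω)) = H p (fun ω (k : Fin K) => X k ω) := by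
    have hswap : H p (fun ω => Prod.swap ((fun ω' => (F * W ω', fun k => X k ω')) ω))
        = H p (fun ω => (F * W ω, fun k => X k ω)) :=
      Aux.H_comp_inj (X := fun ω' => (F * W ω', fun k => X k ω')) Prod.swap Prod.swap_injective
    calc H p (fun ω => ((fun k => X k ω), F * W ω))
        = H p (fun ω => (F * W ω, fun k => X k ω)) := hswap
      _ = H p (fun ω (k : Fin K) => X k ω) := hcor
  -- H (B, (Xv, A)) = H (B, Xv)
  have hT : H p (fun ω => (G * W ω, (fun k => X k ω), F * W ω))
      = H p (fun ω => (G * W ω, fun k => X k ω)) := by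
    have hdet2 : Aux.DetOn p (fun ω => (G * W ω, fun k => X k ω)) (fun ω => F * W ω) := by
      intro ω ω' h1' h2' he
      exact hdetA ω ω' h1' h2' (congrArg Prod.snd he)
    have lemA : H p (fun ω => (F * W ω, (G * W ω, fun k => X k ω)))
        = H p (fun ω => (G * W ω, fun k => X k ω)) :=
      Aux.H_pair_eq_of_detOn hp hdet2
    have hinj : Function.Injective
        (fun c : Matrix (Fin M) (Fin L) 𝔽 × (Matrix (Fin N) (Fin L) 𝔽 × (∀ k, χ k)) =>
          (c.2.1, c.2.2, c.1)) := by
      rintro ⟨a, b, x⟩ ⟨a', b', x'⟩ hcc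
      simp only [Prod.mk.injEq] at hcc
      simp [hcc.1, hcc.2.1, hcc.2.2]
    have hre : H p (fun ω =>
        (fun c : Matrix (Fin M) (Fin L) 𝔽 × (Matrix (Fin N) (Fin L) 𝔽 × (∀ k, χ k)) =>
          (c.2.1, c.2.2, c.1)) ((fun ω' => (F * W ω', (G * W ω', fun k => X k ω'))) ω))
        = H p (fun ω => (F * W ω, (G * W ω, fun k => X k ω))) :=
      Aux.H_comp_inj (X := fun ω' => (F * W ω', (G * W ω', fun k => X k ω')))
        (fun c : Matrix (Fin M) (Fin L) 𝔽 × (Matrix (Fin N) (Fin L) 𝔽 × (∀ k, χ k)) =>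
          (c.2.1, c.2.2, c.1)) hinj
    calc H p (fun ω => (G * W ω, (fun k => X k ω), F * W ω))
        = H p (fun ω => (F * W ω, (G * W ω, fun k => X k ω))) := hre
      _ = H p (fun ω => (G * W ω, fun k => X k ω)) := lemA
  -- security, arithmetically
  have hsec : H p (fun ω => (G * W ω, F * W ω))
      + H p (fun ω => ((fun k => X k ω), F * W ω))
      - H p (fun ω => (G * W ω, (fun k => X k ω), F * W ω))
      - H p (fun ω => F * W ω) = 0 := by
    have hs := secure
    unfold CMI at hs
    exact hs
  -- step F1 : H (Xv, W) ≤ H Zs + H W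
  have hXvW_le : H p (fun ω => ((fun k => X k ω), W ω)) ≤ H p Zs + H p W := by
    have hfeq : (fun ω => ((fun k => X k ω), W ω))
        = (fun ω => (fun zw : σ × Matrix (Fin K) (Fin L) 𝔽 =>
            ((fun k => fx k (zw.2 k) (fz k zw.1)), zw.2)) ((fun ω' => (Zs ω', W ω')) ω)) := by
      funext ω
      dsimp only
      congr 1
      funext k
      rw [hx k ω, hz k ω]
    calc H p (fun ω => ((fun k => X k ω), W ω))
        = H p (fun ω => (fun zw : σ × Matrix (Fin K) (Fin L) 𝔽 =>
            ((fun k => fx k (zw.2 k) (fz k zw.1)), zw.2)) ((fun ω' => (Zs ω', W ω')) ω)) := by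
          rw [hfeq]
      _ ≤ H p (fun ω => (Zs ω, W ω)) :=
          Aux.H_comp_le (X := fun ω' => (Zs ω', W ω')) hp
            (fun zw : σ × Matrix (Fin K) (Fin L) 𝔽 =>
              ((fun k => fx k (zw.2 k) (fz k zw.1)), zw.2))
      _ ≤ H p Zs + H p W := Aux.H_pair_le hp h1
  -- step (iii): H (B, Xv) ≤ H (Xv, W)
  have hBXv_le : H p (fun ω => (G * W ω, fun k => X k ω))
      ≤ H p (fun ω => ((fun k => X k ω), W ω)) :=
    Aux.H_comp_le (X := fun ω' => ((fun k => X k ω'), W ω'))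
      (f := fun c : (∀ k, χ k) × Matrix (Fin K) (Fin L) 𝔽 => (G * c.2, c.1)) hp
  -- step F4 : H W ≤ H Xv
  have hdetW : Aux.DetOn p
      (fun ω => ((fun k => X k ω), ((fun k => Z k ω), Zs ω))) W := by
    intro ω ω' hω hω' heq
    have hXeq : (fun k => X k ω) = (fun k => X k ω') := congrArg Prod.fst heq
    have hZZeq : ((fun k => Z k ω), Zs ω) = ((fun k => Z k ω'), Zs ω') :=
      congrArg Prod.snd heq
    have hZvec : (fun k => Z k ω) = (fun k => Z k ω') := congrArg Prod.fst hZZeq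
    funext k
    by_contra hk
    obtain ⟨l, hl⟩ := Function.ne_iff.1 hk
    have hprpos : 0 < pr p (fun ω => (W ω, (fun k => Z k ω), Zs ω))
        (Function.update (W ω) k (W ω' k), (fun k => Z k ω), Zs ω) := by
      rw [indep (Function.update (W ω) k (W ω' k)) ((fun k => Z k ω), Zs ω)]
      refine mul_pos ?_ (Aux.pr_pos_self hp hω (fun ω => ((fun k => Z k ω), Zs ω)))
      rw [W_unif (Function.update (W ω) k (W ω' k))]
      have hcpos : (0 : ℝ) < (Fintype.card (Matrix (Fin K) (Fin L) 𝔽) : ℝ) := by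
        exact_mod_cast (Fintype.card_pos : 0 < Fintype.card (Matrix (Fin K) (Fin L) 𝔽))
      positivity
    obtain ⟨ω₂, hω₂, hval⟩ := Aux.exists_of_pr_pos hp hprpos
    have hW2 : W ω₂ = Function.update (W ω) k (W ω' k) := congrArg Prod.fst hval
    have hZZ2 : ((fun k => Z k ω₂), Zs ω₂) = ((fun k => Z k ω), Zs ω) :=
      congrArg Prod.snd hval
    have hZvec2 : (fun k => Z k ω₂) = (fun k => Z k ω) := congrArg Prod.fst hZZ2
    -- the messages at ω₂ agree with those at ω
    have hXv2 : (fun k => X k ω₂) = (fun k => X k ω) := by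
      funext j
      have hzj : Z j ω₂ = Z j ω := congrFun hZvec2 j
      by_cases hjk : j = k
      · subst hjk
        calc X j ω₂
            = fx j (W ω₂ j) (Z j ω₂) := hx j ω₂
          _ = fx j (W ω' j) (Z j ω') := by
              rw [hW2, show Function.update (W ω) j (W ω' j) j = W ω' j from Function.update_self _ _ _, hzj, congrFun hZvec j]
          _ = X j ω' := (hx j ω').symm
          _ = X j ω := (congrFun hXeq j).symm
      · rw [hx j ω₂, hx j ω, hW2, show Function.update (W ω) k (W ω' k) j = W ω j from Function.update_of_ne hjk _ _, hzj]
    -- correctness forces F * (updated W) = F * W ω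
    have hFW : F * W ω₂ = F * W ω := hdetA ω₂ ω hω₂ hω hXv2
    rw [hW2] at hFW
    obtain ⟨i, hi⟩ := hFcol k
    have hcomp : ∑ j, F i j * Function.update (W ω) k (W ω' k) j l
        = ∑ j, F i j * W ω j l := by
      have hFWil := congrFun (congrFun hFW i) l
      exact hFWil
    have hsplit : ∑ j, F i j * Function.update (W ω) k (W ω' k) j l
        - ∑ j, F i j * W ω j l = F i k * (W ω' k l - W ω k l) := by
      rw [← Finset.sum_sub_distrib, Finset.sum_eq_single k]
      · rw [show Function.update (W ω) k (W ω' k) k = W ω' k from Function.update_self _ _ _]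
        ring
      · intro j _ hj
        rw [show Function.update (W ω) k (W ω' k) j = W ω j from Function.update_of_ne hj _ _]
        ring
      · intro hfalse
        exact absurd (Finset.mem_univ k) hfalse
    rw [hcomp, sub_self] at hsplit
    exact (mul_ne_zero hi (sub_ne_zero_of_ne (Ne.symm hl))) hsplit.symm
  have hXv_ge : H p W ≤ H p (fun ω (k : Fin K) => X k ω) := by
    have hXvZZ : H p (fun ω => ((fun k => X k ω), ((fun k => Z k ω), Zs ω)))
        ≤ H p (fun ω (k : Fin K) => X k ω) + H p (fun ω => ((fun k => Z k ω), Zs ω)) :=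
      Aux.H_pair_le hp h1
    have hWeq : H p (fun ω => (W ω, ((fun k => X k ω), ((fun k => Z k ω), Zs ω))))
        = H p (fun ω => ((fun k => X k ω), ((fun k => Z k ω), Zs ω))) :=
      Aux.H_pair_eq_of_detOn hp hdetW
    have hproj : H p (fun ω => (W ω, ((fun k => Z k ω), Zs ω)))
        ≤ H p (fun ω => (W ω, ((fun k => X k ω), ((fun k => Z k ω), Zs ω)))) :=
      Aux.H_comp_le
        (X := fun ω => (W ω, ((fun k => X k ω), ((fun k => Z k ω), Zs ω))))
        (f := fun c : Matrix (Fin K) (Fin L) 𝔽 × ((∀ k, χ k) × ((∀ k, κ k) × σ)) =>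
          (c.1, c.2.2)) hp
    have hindepH : H p (fun ω => (W ω, ((fun k => Z k ω), Zs ω)))
        = H p W + H p (fun ω => ((fun k => Z k ω), Zs ω)) :=
      Aux.H_pair_of_indep hp h1 (fun a b => indep a b)
    linarith
  -- final assembly
  have hfinal : H p (fun ω => (G * W ω, F * W ω)) - H p (fun ω => F * W ω) ≤ H p Zs := by
    linarith
  rw [hHBA, hHA] at hfinal
  calc (((Matrix.fromRows F G).rank : ℝ) - (F.rank : ℝ)) * L * Real.log (Fintype.card 𝔽)
      = (((Matrix.fromRows F G).rank * L : ℕ) : ℝ) * Real.log (Fintype.card 𝔽)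
        - ((F.rank * L : ℕ) : ℝ) * Real.log (Fintype.card 𝔽) := by
        push_cast
        ring
    _ ≤ H p Zs := hfinal

end SecAgg
end

section
/- (Lemma 1) For any secure aggregation scheme for (F, G), the mutual information between the message tuple and the input satisfies I[(X_1, …, X_K) : W] ≤ (K − (rank([F; G]) − rank(F))) · L · log q. -/
/-!
Shannon entropy machinery for finitely-supported random variables on a finite
probability space, and the definition of a vector-linear secure aggregation
scheme (Yuan–Sun, "Vector Linear Secure Aggregation").
-/

open scoped BigOperators Classical

namespace SecAgg

section AuxLemmas

open Finset Real

variable {Ω : Type*} [Fintype Ω] {α β : Type*} {p : Ω → ℝ}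

lemma negMulLog_sum_le {ι : Type*} (s : Finset ι) (g : ι → ℝ)
    (hg : ∀ i ∈ s, 0 ≤ g i) :
    Real.negMulLog (∑ i ∈ s, g i) ≤ ∑ i ∈ s, Real.negMulLog (g i) := by
  have hrw : Real.negMulLog (∑ i ∈ s, g i)
      = ∑ i ∈ s, (-(g i) * Real.log (∑ j ∈ s, g j)) := by
    rw [Real.negMulLog, ← Finset.sum_mul, ← Finset.sum_neg_distrib]
  rw [hrw]
  refine Finset.sum_le_sum fun i hi => ?_
  rcases (hg i hi).eq_or_lt with h0 | h0
  · simp [← h0, Real.negMulLog]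
  · have hle : g i ≤ ∑ j ∈ s, g j := Finset.single_le_sum hg hi
    have := Real.log_le_log h0 hle
    rw [Real.negMulLog]
    nlinarith

lemma negMulLog_sum_lt {ι : Type*} (s : Finset ι) (g : ι → ℝ)
    (hg : ∀ i ∈ s, 0 ≤ g i) {i j : ι} (hi : i ∈ s) (hj : j ∈ s) (hij : i ≠ j)
    (hgi : 0 < g i) (hgj : 0 < g j) :
    Real.negMulLog (∑ i ∈ s, g i) < ∑ i ∈ s, Real.negMulLog (g i) := by
  have hrw : Real.negMulLog (∑ i ∈ s, g i)
      = ∑ i ∈ s, (-(g i) * Real.log (∑ j ∈ s, g j)) := by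
    rw [Real.negMulLog, ← Finset.sum_mul, ← Finset.sum_neg_distrib]
  rw [hrw]
  have hstrict : g i < ∑ j ∈ s, g j := by
    have h1 : g i + ∑ k ∈ s.erase i, g k = ∑ k ∈ s, g k := Finset.add_sum_erase s g hi
    have h2 : g j ≤ ∑ k ∈ s.erase i, g k :=
      Finset.single_le_sum (fun k hk => hg k (Finset.mem_of_mem_erase hk))
        (Finset.mem_erase.2 ⟨fun h => hij h.symm, hj⟩)
    linarith
  refine Finset.sum_lt_sum (fun k hk => ?_) ⟨i, hi, ?_⟩
  · rcases (hg k hk).eq_or_lt with h0 | h0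
    · simp [← h0, Real.negMulLog]
    · have hle : g k ≤ ∑ j ∈ s, g j := Finset.single_le_sum hg hk
      have := Real.log_le_log h0 hle
      rw [Real.negMulLog]
      nlinarith
  · have := Real.log_lt_log hgi hstrict
    rw [Real.negMulLog]
    nlinarith

lemma pr_nonneg (hp : ∀ ω, 0 ≤ p ω) (X : Ω → α) (a : α) : 0 ≤ pr p X a :=
  Finset.sum_nonneg fun ω _ => by by_cases h : X ω = a <;> simp [h, hp ω]

lemma pr_eq_zero (X : Ω → α) {a : α} (h : a ∉ Finset.univ.image X) :
    pr p X a = 0 :=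
  Finset.sum_eq_zero fun ω _ => by
    have : X ω ≠ a := fun he => h (he ▸ Finset.mem_image_of_mem X (Finset.mem_univ ω))
    simp [this]

lemma pr_pos (hp : ∀ ω, 0 ≤ p ω) (X : Ω → α) {ω : Ω} (h : p ω ≠ 0) :
    0 < pr p X (X ω) := by
  have h1 : 0 < p ω := (hp ω).lt_of_ne (Ne.symm h)
  have h2 : p ω ≤ pr p X (X ω) := by
    have := Finset.single_le_sum
      (f := fun ω' => if X ω' = X ω then p ω' else 0)
      (fun ω' _ => by by_cases h : X ω' = X ω <;> simp [h, hp ω']) (Finset.mem_univ ω)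
    simpa [pr] using this
  linarith

lemma pr_comp (f : α → β) (T : Ω → α) (b : β) :
    pr p (fun ω => f (T ω)) b
      = ∑ a ∈ (Finset.univ.image T).filter (fun a => f a = b), pr p T a := by
  unfold pr
  rw [Finset.sum_comm]
  refine Finset.sum_congr rfl fun ω _ => ?_
  rw [Finset.sum_ite_eq]
  simp [Finset.mem_filter]

lemma H_comp_le (hp : ∀ ω, 0 ≤ p ω) (f : α → β) (T : Ω → α) :
    H p (fun ω => f (T ω)) ≤ H p T := by
  have himg : Finset.univ.image (fun ω => f (T ω)) = (Finset.univ.image T).image f := by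
    rw [Finset.image_image]; rfl
  unfold H
  rw [himg, ← Finset.sum_fiberwise_of_maps_to
    (fun a _ => Finset.mem_image_of_mem f ‹_›) (fun a => Real.negMulLog (pr p T a))]
  refine Finset.sum_le_sum fun b _ => ?_
  rw [pr_comp]
  exact negMulLog_sum_le _ _ fun a _ => pr_nonneg hp T a

lemma H_comp_lt (hp : ∀ ω, 0 ≤ p ω) (f : α → β) (T : Ω → α) {ω₁ ω₂ : Ω}
    (h1 : p ω₁ ≠ 0) (h2 : p ω₂ ≠ 0) (hT : T ω₁ ≠ T ω₂) (hf : f (T ω₁) = f (T ω₂)) :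
    H p (fun ω => f (T ω)) < H p T := by
  have himg : Finset.univ.image (fun ω => f (T ω)) = (Finset.univ.image T).image f := by
    rw [Finset.image_image]; rfl
  unfold H
  rw [himg, ← Finset.sum_fiberwise_of_maps_to
    (fun a _ => Finset.mem_image_of_mem f ‹_›) (fun a => Real.negMulLog (pr p T a))]
  refine Finset.sum_lt_sum (fun b _ => by
      rw [pr_comp]
      exact negMulLog_sum_le _ _ fun a _ => pr_nonneg hp T a)
    ⟨f (T ω₁), Finset.mem_image_of_mem f (Finset.mem_image_of_mem T (Finset.mem_univ ω₁)), ?_⟩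
  rw [pr_comp]
  refine negMulLog_sum_lt _ _ (fun a _ => pr_nonneg hp T a)
    (i := T ω₁) (j := T ω₂) ?_ ?_ hT (pr_pos hp T h1) (pr_pos hp T h2)
  · exact Finset.mem_filter.2 ⟨Finset.mem_image_of_mem T (Finset.mem_univ ω₁), rfl⟩
  · exact Finset.mem_filter.2 ⟨Finset.mem_image_of_mem T (Finset.mem_univ ω₂), hf.symm⟩

lemma pr_comp_inj {f : α → β} (hf : Function.Injective f) (T : Ω → α) (a : α) :
    pr p (fun ω => f (T ω)) (f a) = pr p T a := by
  unfold pr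
  refine Finset.sum_congr rfl fun ω _ => ?_
  simp [hf.eq_iff]

lemma H_comp_inj {f : α → β} (hf : Function.Injective f) (T : Ω → α) :
    H p (fun ω => f (T ω)) = H p T := by
  have himg : Finset.univ.image (fun ω => f (T ω)) = (Finset.univ.image T).image f := by
    rw [Finset.image_image]; rfl
  unfold H
  rw [himg, Finset.sum_image (fun a _ b _ h => hf h)]
  exact Finset.sum_congr rfl fun a _ => by rw [pr_comp_inj hf]

lemma pr_congr_ae {X X' : Ω → α} (h : ∀ ω, p ω ≠ 0 → X ω = X' ω) (a : α) :
    pr p X a = pr p X' a := by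
  refine Finset.sum_congr rfl fun ω _ => ?_
  by_cases hω : p ω = 0
  · simp [hω]
  · rw [h ω hω]

lemma H_congr_ae {X X' : Ω → α} (h : ∀ ω, p ω ≠ 0 → X ω = X' ω) :
    H p X = H p X' := by
  have e1 : ∑ a ∈ Finset.univ.image X, Real.negMulLog (pr p X a)
      = ∑ a ∈ Finset.univ.image X ∪ Finset.univ.image X', Real.negMulLog (pr p X a) :=
    Finset.sum_subset Finset.subset_union_left
      (fun a _ ha => by rw [pr_eq_zero X ha, Real.negMulLog_zero])
  have e2 : ∑ a ∈ Finset.univ.image X', Real.negMulLog (pr p X' a)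
      = ∑ a ∈ Finset.univ.image X ∪ Finset.univ.image X', Real.negMulLog (pr p X' a) :=
    Finset.sum_subset Finset.subset_union_right
      (fun a _ ha => by rw [pr_eq_zero X' ha, Real.negMulLog_zero])
  unfold H
  rw [e1, e2]
  exact Finset.sum_congr rfl fun a _ => by rw [pr_congr_ae h]

lemma exists_fun_of_Hc_eq_zero [Nonempty α] (hp : ∀ ω, 0 ≤ p ω)
    {Y : Ω → α} {X : Ω → β} (h : Hc p Y X = 0) :
    ∃ g : β → α, ∀ ω, p ω ≠ 0 → Y ω = g (X ω) := by
  have key : ∀ ω₁ ω₂, p ω₁ ≠ 0 → p ω₂ ≠ 0 → X ω₁ = X ω₂ → Y ω₁ = Y ω₂ := by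
    intro ω₁ ω₂ h1 h2 hX
    by_contra hY
    have hT : (Y ω₁, X ω₁) ≠ (Y ω₂, X ω₂) :=
      fun he => hY (congrArg Prod.fst he)
    have hlt := H_comp_lt hp Prod.snd (fun ω => (Y ω, X ω)) h1 h2 hT hX
    have hXeq : H p (fun ω => Prod.snd (Y ω, X ω)) = H p X := rfl
    unfold Hc at h
    rw [hXeq] at hlt
    linarith
  refine ⟨fun b => if hb : ∃ ω, p ω ≠ 0 ∧ X ω = b then Y hb.choose
    else Classical.arbitrary α, fun ω hω => ?_⟩
  have hb : ∃ ω', p ω' ≠ 0 ∧ X ω' = X ω := ⟨ω, hω, rfl⟩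
  show Y ω = if hb : ∃ ω', p ω' ≠ 0 ∧ X ω' = X ω then Y hb.choose
    else Classical.arbitrary α
  rw [dif_pos hb]
  exact key ω hb.choose hω hb.choose_spec.1 hb.choose_spec.2.symm

/-- Entropy of `f ∘ W` for uniformly distributed `W` when all fibers of `f`
over the image have the same cardinality. -/
lemma H_unif_comp [Fintype α] [Nonempty α] {W : Ω → α}
    (hW : ∀ a, pr p W a = (Fintype.card α : ℝ)⁻¹) (f : α → β) (Kc : ℕ)
    (hKc : ∀ y ∈ Finset.univ.image f, (Finset.univ.filter (fun a => f a = y)).card = Kc) :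
    H p (fun ω => f (W ω)) = Real.log ((Finset.univ.image f).card) := by
  have hcard : (0 : ℝ) < (Fintype.card α : ℝ) := by
    exact_mod_cast Fintype.card_pos
  have himgW : Finset.univ.image W = (Finset.univ : Finset α) := by
    refine Finset.eq_univ_iff_forall.2 fun a => ?_
    by_contra hna
    have h0 := pr_eq_zero (p := p) W hna
    rw [hW] at h0
    exact absurd h0 (by positivity)
  have himg : Finset.univ.image (fun ω => f (W ω)) = Finset.univ.image f := by
    have h' : Finset.univ.image (fun ω => f (W ω)) = (Finset.univ.image W).image f := by
      rw [Finset.image_image]; rfl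
    rw [h', himgW]
  have hpr : ∀ y ∈ Finset.univ.image f,
      pr p (fun ω => f (W ω)) y = (Kc : ℝ) * (Fintype.card α : ℝ)⁻¹ := by
    intro y hy
    rw [pr_comp, himgW, Finset.sum_congr rfl (fun a _ => hW a), Finset.sum_const,
      hKc y hy, nsmul_eq_mul]
  unfold H
  rw [himg, Finset.sum_congr rfl (fun y hy => by rw [hpr y hy]), Finset.sum_const,
    nsmul_eq_mul]
  set R := (Finset.univ.image f).card with hR
  have hRpos : 0 < R := Finset.card_pos.2 (Finset.image_nonempty.2 Finset.univ_nonempty)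
  have hRK : R * Kc = Fintype.card α := by
    have hcc := Finset.card_eq_sum_card_fiberwise
      (s := (Finset.univ : Finset α)) (t := Finset.univ.image f) (f := f)
      (fun a _ => Finset.mem_image_of_mem f (Finset.mem_univ a))
    rw [Finset.sum_congr rfl hKc, Finset.sum_const, smul_eq_mul, Finset.card_univ] at hcc
    exact hcc.symm
  have hKcpos : 0 < Kc := by
    have := Fintype.card_pos (α := α)
    by_contra h0
    push_neg at h0
    interval_cases Kc
    omega
  have hRne : (R : ℝ) ≠ 0 := by positivity
  have hKne : (Kc : ℝ) ≠ 0 := by positivity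
  have hval : (Kc : ℝ) * (Fintype.card α : ℝ)⁻¹ = (R : ℝ)⁻¹ := by
    have hc : (Fintype.card α : ℝ) = (R : ℝ) * (Kc : ℝ) := by exact_mod_cast hRK.symm
    rw [hc]
    field_simp
  rw [hval, Real.negMulLog, Real.log_inv]
  field_simp

end AuxLemmas

section CountingLemmas

open Finset

variable {𝔽 : Type} [Field 𝔽] [Fintype 𝔽] {K L : ℕ} {ι : Type} [Fintype ι]

lemma card_fiber_mul (A : Matrix ι (Fin K) 𝔽) {y : Matrix ι (Fin L) 𝔽}
    {DE : DecidableEq (Matrix ι (Fin L) 𝔽)}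
    {Dy : DecidablePred (fun w : Matrix (Fin K) (Fin L) 𝔽 => A * w = y)}
    {D0 : DecidablePred (fun w : Matrix (Fin K) (Fin L) 𝔽 => A * w = 0)}
    (hy : y ∈ @Finset.image _ _ DE (fun w : Matrix (Fin K) (Fin L) 𝔽 => A * w) Finset.univ) :
    (@Finset.filter _ _ Dy Finset.univ).card
      = (@Finset.filter _ _ D0 Finset.univ).card := by
  obtain ⟨w₀, -, hw₀⟩ := Finset.mem_image.1 hy
  refine Finset.card_bij' (fun w _ => w - w₀) (fun w _ => w + w₀) ?_ ?_ ?_ ?_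
  · intro w hw
    rw [Finset.mem_filter] at hw ⊢
    exact ⟨Finset.mem_univ _, by rw [Matrix.mul_sub, hw.2, hw₀, sub_self]⟩
  · intro w hw
    rw [Finset.mem_filter] at hw ⊢
    exact ⟨Finset.mem_univ _, by rw [Matrix.mul_add, hw.2, hw₀, zero_add]⟩
  · intro w _
    exact sub_add_cancel w w₀
  · intro w _
    exact add_sub_cancel_right w w₀

lemma card_image_mul (A : Matrix ι (Fin K) 𝔽)
    {DE : DecidableEq (Matrix ι (Fin L) 𝔽)} :
    ((@Finset.image _ _ DE (fun w : Matrix (Fin K) (Fin L) 𝔽 => A * w) Finset.univ).card)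
      = Fintype.card 𝔽 ^ (A.rank * L) := by
  have h1 : (@Finset.image _ _ DE (fun w : Matrix (Fin K) (Fin L) 𝔽 => A * w) Finset.univ).card
      = Fintype.card (Set.range (fun w : Matrix (Fin K) (Fin L) 𝔽 => A * w)) := by
    rw [← Set.toFinset_range, Set.toFinset_card]
  have hcol : ∀ (w : Matrix (Fin K) (Fin L) 𝔽) (i : ι) (j : Fin L),
      (A * w) i j = A.mulVec (fun k => w k j) i := by
    intro w i j
    simp [Matrix.mul_apply, Matrix.mulVec, dotProduct]
  let Φ : Set.range (fun w : Matrix (Fin K) (Fin L) 𝔽 => A * w)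
      → (Fin L → Set.range A.mulVec) := fun y j =>
    ⟨fun i => (y : Matrix ι (Fin L) 𝔽) i j, by
      obtain ⟨w, hw⟩ := y.2
      exact ⟨fun k => w k j, by
        funext i
        rw [← hw]
        exact (hcol w i j).symm⟩⟩
  have hΦbij : Function.Bijective Φ := by
    constructor
    · intro y₁ y₂ hΦ
      apply Subtype.ext
      funext i j
      have h' := Subtype.ext_iff.mp (congrFun hΦ j)
      exact congrFun h' i
    · intro v
      choose w hw using fun j => (v j).2
      refine ⟨⟨A * (Matrix.of fun k j => w j k), ⟨_, rfl⟩⟩, ?_⟩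
      funext j
      apply Subtype.ext
      funext i
      show (A * (Matrix.of fun k j => w j k)) i j = (v j).1 i
      rw [hcol]
      exact congrFun (hw j) i
  have h2 : Fintype.card (Set.range (fun w : Matrix (Fin K) (Fin L) 𝔽 => A * w))
      = Fintype.card (Fin L → Set.range A.mulVec) :=
    Fintype.card_congr (Equiv.ofBijective Φ hΦbij)
  have h3 : Fintype.card (Fin L → Set.range A.mulVec)
      = Fintype.card (Set.range A.mulVec) ^ L := by
    rw [Fintype.card_fun, Fintype.card_fin]
  have h4 : Fintype.card (Set.range A.mulVec) = Fintype.card 𝔽 ^ A.rank := by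
    have hs : (LinearMap.range A.mulVecLin : Set (ι → 𝔽)) = Set.range A.mulVec := by
      rw [LinearMap.coe_range]; rfl
    have h5 : Fintype.card (Set.range A.mulVec)
        = Fintype.card (LinearMap.range A.mulVecLin) :=
      Fintype.card_congr (Equiv.setCongr hs.symm)
    rw [h5, Module.card_eq_pow_finrank (K := 𝔽)]
    rfl
  rw [h1, h2, h3, h4, ← pow_mul]

end CountingLemmas

end SecAgg

namespace SecAgg

/-- **Lemma 1.** For any secure aggregation scheme for `(F, G)`, the messages
cannot reveal more than `(K − (rank [F; G] − rank F)) · L · log q` of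
information about the inputs. -/
theorem leakage_upper_bound
    {𝔽 : Type} [Field 𝔽] [Fintype 𝔽] {K M N : ℕ} {L : ℕ}
    (hK : 1 ≤ K) (hL : 1 ≤ L)
    (F : Matrix (Fin M) (Fin K) 𝔽) (G : Matrix (Fin N) (Fin K) 𝔽)
    (hF : F.rank = M) (hG : G.rank = N)
    (Ω : Type) [Fintype Ω] (κ : Fin K → Type) (σ : Type) (χ : Fin K → Type)
    (S : Scheme 𝔽 L F G Ω κ σ χ) :
    MI S.p (fun ω k => S.X k ω) S.W
      ≤ ((K : ℝ) - (((Matrix.fromRows F G).rank : ℝ) - (F.rank : ℝ))) * L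
          * Real.log (Fintype.card 𝔽) := by
  classical
  have hp := S.p_nonneg
  -- entropy of `A * W` for uniform `W`
  have hmul : ∀ (ι : Type) [Fintype ι] (A : Matrix ι (Fin K) 𝔽),
      H S.p (fun ω => A * S.W ω)
        = (A.rank : ℝ) * (L : ℝ) * Real.log (Fintype.card 𝔽) := by
    intro ι hι A
    have h := H_unif_comp S.W_unif (fun w => A * w)
        ((Finset.univ.filter (fun w : Matrix (Fin K) (Fin L) 𝔽 => A * w = 0)).card)
        (fun y hy => card_fiber_mul A hy)
    rw [card_image_mul A] at h
    rw [h]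
    push_cast
    rw [Real.log_pow]
    push_cast
    ring
  -- the message-determined reconstruction of `F * W`
  haveI : Nonempty (Matrix (Fin M) (Fin L) 𝔽) := ⟨0⟩
  obtain ⟨g, hg0⟩ := exists_fun_of_Hc_eq_zero S.p_nonneg S.correct
  have hg : ∀ ω, S.p ω ≠ 0 → F * S.W ω = g (fun k => S.X k ω) := hg0
  -- Step A : MI = H W - Hc(W | X)
  have hswap : H S.p (fun ω => ((fun k => S.X k ω), S.W ω))
      = H S.p (fun ω => (S.W ω, fun k => S.X k ω)) :=
    H_comp_inj Prod.swap_injective (fun ω => (S.W ω, fun k => S.X k ω))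
  -- Step B : H (G*W, X) ≤ H (W, X)
  have hB : H S.p (fun ω => (G * S.W ω, fun k => S.X k ω))
      ≤ H S.p (fun ω => (S.W ω, fun k => S.X k ω)) :=
    H_comp_le hp (fun a : Matrix (Fin K) (Fin L) 𝔽 × (∀ k, χ k) => (G * a.1, a.2))
      (fun ω => (S.W ω, fun k => S.X k ω))
  -- Step C1 : H (X, F*W) = H X
  have hinj1 : Function.Injective (fun x : ∀ k, χ k => (x, g x)) :=
    fun a b h => congrArg Prod.fst h
  have hC1 : H S.p (fun ω => ((fun k => S.X k ω), F * S.W ω))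
      = H S.p (fun ω k => S.X k ω) := by
    have e1 : H S.p (fun ω => ((fun k => S.X k ω), F * S.W ω))
        = H S.p (fun ω => ((fun k => S.X k ω), g (fun k => S.X k ω))) :=
      H_congr_ae (fun ω hω =>
        congrArg (fun y => ((fun k => S.X k ω), y)) (hg ω hω))
    rw [e1]
    exact H_comp_inj hinj1 (fun ω k => S.X k ω)
  -- Step C2 : H (G*W, X, F*W) = H (G*W, X)
  have hinj2 : Function.Injective
      (fun a : Matrix (Fin N) (Fin L) 𝔽 × (∀ k, χ k) => (a.1, a.2, g a.2)) := by
    intro a b h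
    have h1 := congrArg Prod.fst h
    have h2 := congrArg (fun x : Matrix (Fin N) (Fin L) 𝔽 ×
      ((∀ k, χ k) × Matrix (Fin M) (Fin L) 𝔽) => x.2.1) h
    exact Prod.ext h1 h2
  have hC2 : H S.p (fun ω => (G * S.W ω, (fun k => S.X k ω), F * S.W ω))
      = H S.p (fun ω => (G * S.W ω, fun k => S.X k ω)) := by
    have e1 : H S.p (fun ω => (G * S.W ω, (fun k => S.X k ω), F * S.W ω))
        = H S.p (fun ω => (G * S.W ω, (fun k => S.X k ω), g (fun k => S.X k ω))) :=
      H_congr_ae (fun ω hω =>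
        congrArg (fun y => (G * S.W ω, (fun k => S.X k ω), y)) (hg ω hω))
    rw [e1]
    exact H_comp_inj hinj2 (fun ω => (G * S.W ω, fun k => S.X k ω))
  -- Step C3 : H (G*W, F*W) = H (fromRows F G * W)
  have hinj3 : Function.Injective (fun y : Matrix (Fin M ⊕ Fin N) (Fin L) 𝔽 =>
      ((Matrix.of fun i j => y (Sum.inr i) j : Matrix (Fin N) (Fin L) 𝔽),
       (Matrix.of fun i j => y (Sum.inl i) j : Matrix (Fin M) (Fin L) 𝔽))) := by
    intro a b h
    have h1 := congrArg Prod.fst h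
    have h2 := congrArg Prod.snd h
    funext i j
    cases i with
    | inl i => exact congrFun (congrFun h2 i) j
    | inr i => exact congrFun (congrFun h1 i) j
  have hC3 : H S.p (fun ω => (G * S.W ω, F * S.W ω))
      = H S.p (fun ω => Matrix.fromRows F G * S.W ω) := by
    have e1 : (fun ω => (G * S.W ω, F * S.W ω))
        = fun ω =>
          ((Matrix.of fun i j => (Matrix.fromRows F G * S.W ω) (Sum.inr i) j :
              Matrix (Fin N) (Fin L) 𝔽),
           (Matrix.of fun i j => (Matrix.fromRows F G * S.W ω) (Sum.inl i) j :
              Matrix (Fin M) (Fin L) 𝔽)) := by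
      funext ω
      rw [Matrix.fromRows_mul]
      rfl
    rw [e1]
    exact H_comp_inj hinj3 (fun ω => Matrix.fromRows F G * S.W ω)
  -- entropies of the linear images
  have hFW : H S.p (fun ω => F * S.W ω)
      = (F.rank : ℝ) * (L : ℝ) * Real.log (Fintype.card 𝔽) := hmul (Fin M) F
  have hFG : H S.p (fun ω => (G * S.W ω, F * S.W ω))
      = ((Matrix.fromRows F G).rank : ℝ) * (L : ℝ) * Real.log (Fintype.card 𝔽) :=
    hC3.trans (hmul (Fin M ⊕ Fin N) (Matrix.fromRows F G))
  have hWv : H S.p S.W = (K : ℝ) * (L : ℝ) * Real.log (Fintype.card 𝔽) := by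
    have e1 : (fun ω => (1 : Matrix (Fin K) (Fin K) 𝔽) * S.W ω) = S.W := by
      funext ω; rw [Matrix.one_mul]
    have h := hmul (Fin K) (1 : Matrix (Fin K) (Fin K) 𝔽)
    rw [e1] at h
    rw [h, Matrix.rank_one, Fintype.card_fin]
  -- security
  have hsec := S.secure
  simp only [CMI] at hsec
  -- final arithmetic
  simp only [MI, Hc] at *
  rw [hswap] at *
  linarith [hB, hC1, hC2, hsec, hFW, hFG, hWv]

end SecAgg
end
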